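/- arXiv:2207.12465 — 2 statements merged into one kernel-verified Lean document; each statement's English description precedes it below -/
import Mathlib

section
/- Let G be a 2-connected graph on n vertices with no cycle of length greater than ℓ, where k = ⌊ℓ/2⌋ ≥ 3 and n ≥ 3k. If v is a vertex of G of degree at most k-1, then the number of 5-cycles of G containing v is at most k(k-2)²·n - (1/2)·k²(k-2)². -/
def TwoConnected {V : Type*} [Fintype V] (G : SimpleGraph V) : Prop :=
  3 ≤ Fintype.card V ∧ G.Connected ∧
    ∀ v : V, ((⊤ : G.Subgraph).deleteVerts {v}).coe.Connected

def CircumAtMost {V : Type*} (G : SimpleGraph V) (ℓ : ℕ) : Prop :=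
  ∀ ⦃v : V⦄ (c : G.Walk v v), c.IsCycle → c.length ≤ ℓ

/-- The number of (unlabeled) `m`-cycle subgraphs of `G` passing through the vertex `v`:
each corresponds to exactly `2m` embeddings of `C_m` hitting `v`. -/
noncomputable def cycleCountThrough {V : Type*} (G : SimpleGraph V) (m : ℕ) (v : V) : ℕ :=
  Nat.card {f : SimpleGraph.cycleGraph m ↪g G // ∃ i, f i = v} / (2 * m)

/-!
An embedding of `C₅` hitting `v` is determined by the position of `v` and the walk `v a x y b`,
where `a ≠ b` are neighbours of `v` (at most `(k - 1)(k - 2)` choices) and, since the embedding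
is induced, `x` and `y` lie in the disjoint sets of neighbours of `a` (resp. `b`) that are not
adjacent to `b` (resp. `a`) and lie outside the closed neighbourhood of `v`. Between two disjoint
sets `A`, `B` there are at most `k |A ∪ B|` edges: otherwise a minimal subgraph of the bipartite
graph `G[A, B]` with more than `k` edges per vertex has minimum degree `≥ k + 1`, and the longest
path argument yields a cycle of length `≥ 2k + 2 > ℓ`. Hence there are at most
`(k - 1)(k - 2) k (n - 2) / 2` five-cycles through `v`, which is below the claimed bound once
`n ≥ 3k`.
-/

open Finset SimpleGraph

lemma CircumAtMost.mono {V : Type*} {G : SimpleGraph V} {ℓ m : ℕ} (h : CircumAtMost G ℓ)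
    (hℓm : ℓ ≤ m) : CircumAtMost G m :=
  fun _ c hc => (h c hc).trans hℓm

namespace SimpleGraph

variable {V : Type*} {G : SimpleGraph V}

namespace Walk

lemma IsPath.exists_isCycle_length_eq_of_adj_getVert {u w : V} {p : G.Walk u w}
    (hp : p.IsPath) {j : ℕ} (hj : 2 ≤ j) (hjp : j ≤ p.length) (hadj : G.Adj u (p.getVert j)) :
    ∃ c : G.Walk (p.getVert j) (p.getVert j), c.IsCycle ∧ c.length = j + 1 := by
  refine ⟨cons hadj.symm (p.take j), (cons_isCycle_iff _ _).mpr ⟨hp.take j, fun he => ?_⟩, ?_⟩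
  · have hsnd := (hp.take j).eq_snd_of_mem_edges (Sym2.eq_swap ▸ he)
    rw [snd, take_getVert, min_eq_right (by omega)] at hsnd
    have hj1 := hp.getVert_injOn (by simp; omega) (by simp; omega) hsnd
    omega
  · simp [take_length, hjp]

lemma IsPath.exists_isPath_forall_adj_mem_support [Fintype V] {u w : V} {p : G.Walk u w}
    (hp : p.IsPath) :
    ∃ (u' : V) (q : G.Walk u' w), q.IsPath ∧ ∀ z, G.Adj u' z → z ∈ q.support := by
  by_cases h : ∃ z, G.Adj u z ∧ z ∉ p.support
  · obtain ⟨z, hz, hzp⟩ := h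
    exact (hp.cons hzp (h := hz.symm)).exists_isPath_forall_adj_mem_support
  · push Not at h
    exact ⟨u, p, hp, h⟩
termination_by Fintype.card V - p.length
decreasing_by
  have := (hp.cons hzp (h := hz.symm)).length_lt
  simp only [length_cons] at this ⊢
  omega

end Walk

theorem Coloring.exists_isCycle_two_mul_le_length [Fintype V] [DecidableRel G.Adj] [Nonempty V]
    (c : G.Coloring Bool) {δ : ℕ} (hδ : 2 ≤ δ) (hdeg : ∀ x, δ ≤ G.degree x) :
    ∃ (u : V) (w : G.Walk u u), w.IsCycle ∧ 2 * δ ≤ w.length := by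
  classical
  obtain ⟨x⟩ := ‹Nonempty V›
  obtain ⟨u, p, hp, hnbrs⟩ :=
    (Walk.IsPath.nil (G := G) (u := x)).exists_isPath_forall_adj_mem_support
  -- the neighbours of `u` sit at odd positions of `p`, so one of them sits at position `≥ 2δ - 1`
  obtain ⟨j, hj, hjp, hadj⟩ : ∃ j, 2 * δ - 1 ≤ j ∧ j ≤ p.length ∧ G.Adj u (p.getVert j) := by
    by_contra! hnear
    have hsub : G.neighborFinset u ⊆ (range (δ - 1)).image (fun m => p.getVert (2 * m + 1)) := by
      intro z hz
      rw [mem_neighborFinset] at hz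
      obtain ⟨i, rfl, hi⟩ := Walk.mem_support_iff_exists_getVert.mp (hnbrs z hz)
      have hodd : ¬Even i := by
        rw [← min_eq_left hi, ← Walk.take_length, c.even_length_iff_congr, Bool.coe_iff_coe]
        exact c.valid hz
      have hlt : i < 2 * δ - 1 := by
        by_contra! h
        exact hnear i h hi hz
      obtain ⟨m, rfl⟩ := Nat.not_even_iff_odd.mp hodd
      exact mem_image.mpr ⟨m, mem_range.mpr (by omega), rfl⟩
    have hcard := (card_le_card hsub).trans card_image_le
    rw [card_range, card_neighborFinset_eq_degree] at hcard
    have hdegu := hdeg u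
    omega
  obtain ⟨w, hw, hlen⟩ := hp.exists_isCycle_length_eq_of_adj_getVert (by omega) hjp hadj
  exact ⟨_, w, hw, by omega⟩

lemma two_mul_card_interedges_le_card_interedges_between [DecidableEq V] [DecidableRel G.Adj]
    {A B : Finset V} [DecidableRel (G.between A B).Adj] (hAB : Disjoint A B) :
    2 * #(G.interedges A B) ≤ #((G.between A B).interedges (A ∪ B) (A ∪ B)) := by
  calc 2 * #(G.interedges A B) = #(G.interedges A B ∪ G.interedges B A) := by
        have hdisj : Disjoint (G.interedges A B) (G.interedges B A) :=
          Finset.disjoint_left.mpr fun e h₁ h₂ => Finset.disjoint_left.mp hAB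
            (G.mem_interedges_iff.mp h₁).1 (G.mem_interedges_iff.mp h₂).1
        have := G.symm
        rw [card_union_of_disjoint hdisj, two_mul]
        exact congrArg _ (Rel.card_interedges_comm A B)
    _ ≤ _ := by
        refine card_le_card fun e he => ?_
        rw [mem_union, mem_interedges_iff, mem_interedges_iff] at he
        rw [mem_interedges_iff, between_adj]
        simp only [mem_union, mem_coe]
        tauto

section Finite

variable [Fintype V] [DecidableEq V] [DecidableRel G.Adj]

lemma card_interedges_le_card_interedges_erase_add (W : Finset V) (z : V) :
    #(G.interedges W W) ≤
      #(G.interedges (W.erase z) (W.erase z)) + 2 * #(G.neighborFinset z ∩ W) := by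
  have hsub : G.interedges W W ⊆ G.interedges (W.erase z) (W.erase z) ∪
      ((G.neighborFinset z ∩ W).image (z, ·) ∪ (G.neighborFinset z ∩ W).image (·, z)) := by
    rintro ⟨x, y⟩ h
    simp only [mk_mem_interedges_iff] at h
    by_cases hx : x = z
    · subst hx; simp [h.2.1, h.2.2]
    by_cases hy : y = z
    · subst hy; simp [h.1, h.2.2.symm]
    · simp [mk_mem_interedges_iff, hx, hy, h]
  calc #(G.interedges W W)
      ≤ #(G.interedges (W.erase z) (W.erase z)) +
          (#((G.neighborFinset z ∩ W).image (z, ·)) +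
            #((G.neighborFinset z ∩ W).image (·, z))) :=
        (card_le_card hsub).trans <| (card_union_le _ _).trans <| by grw [card_union_le]
    _ ≤ _ := by grw [card_image_le, card_image_le]; omega

theorem exists_nonempty_forall_lt_card_neighborFinset_inter {k : ℕ} {W : Finset V}
    (h : 2 * k * #W < #(G.interedges W W)) :
    ∃ U : Finset V, U.Nonempty ∧ ∀ x ∈ U, k < #(G.neighborFinset x ∩ U) := by
  -- a smallest set of edge density above `k` has minimum degree above `k`
  obtain ⟨U, hU, hmin⟩ :=
    ({U ∈ W.powerset | 2 * k * #U < #(G.interedges U U)}).exists_min_image card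
      ⟨W, by simpa using h⟩
  simp only [mem_filter, mem_powerset] at hU hmin
  refine ⟨U, nonempty_iff_ne_empty.mpr ?_, fun x hx => ?_⟩
  · rintro rfl
    simp at hU
  · by_contra! hle
    have hUpos := card_pos.mpr ⟨x, hx⟩
    have hdrop := card_interedges_le_card_interedges_erase_add (G := G) U x
    have hsmaller := hmin (U.erase x) ⟨(erase_subset x U).trans hU.1, ?_⟩
    · rw [card_erase_of_mem hx] at hsmaller
      omega
    · have : 2 * k ≤ 2 * k * #U := Nat.le_mul_of_pos_right _ hUpos
      rw [card_erase_of_mem hx, Nat.mul_sub_one]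
      omega

lemma degree_induce_eq_card_neighborFinset_inter {U : Finset V} (x : (U : Set V)) :
    (G.induce (U : Set V)).degree x = #(G.neighborFinset x ∩ U) := by
  convert congrArg card (map_neighborFinset_induce (G := G) (s := (U : Set V)) x) using 1
  · simp only [card_map, card_neighborFinset_eq_degree]
    congr!
  · simp

theorem card_interedges_le_of_circumAtMost {k : ℕ} (hk : 1 ≤ k) (hc : CircumAtMost G (2 * k + 1))
    {A B : Finset V} (hAB : Disjoint A B) :
    #(G.interedges A B) ≤ k * #(A ∪ B) := by
  classical
  by_contra! hlt
  set H := G.between A B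
  obtain ⟨U, ⟨x, hx⟩, hdeg⟩ := exists_nonempty_forall_lt_card_neighborFinset_inter (G := H)
    (k := k) (W := A ∪ B) (by grw [← two_mul_card_interedges_le_card_interedges_between hAB]; lia)
  have : Nonempty (U : Set V) := ⟨⟨x, hx⟩⟩
  let c : (H.induce (U : Set V)).Coloring Bool := Coloring.mk (fun y => decide (y.1 ∈ A)) <| by
    intro y z hyz
    rcases (between_adj.mp hyz).2 with ⟨hy, hz⟩ | ⟨hy, hz⟩ <;>
      simp_all [Finset.disjoint_right.mp hAB]
  obtain ⟨u, w, hw, hlen⟩ := c.exists_isCycle_two_mul_le_length (δ := k + 1) (by omega)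
    fun y => by rw [degree_induce_eq_card_neighborFinset_inter (G := H)]; exact hdeg y y.2
  let f : H.induce (U : Set V) →g G := (Hom.ofLE between_le).comp (Embedding.induce _).toHom
  have hshort := hc (w.map f) ((Walk.isCycle_map_iff_of_injective Subtype.val_injective).mpr hw)
  rw [Walk.length_map] at hshort
  omega

variable (G) in
/-- If `v a x y b` is an induced `5`-cycle, then `x ∈ G.pentagonSide v a b` and
`y ∈ G.pentagonSide v b a`; `G.pentagonTuples v` collects the tuples `⟨(a, b), (x, y)⟩` so
obtained. -/
def pentagonSide (v a b : V) : Finset V :=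
  G.neighborFinset a \ insert v (G.neighborFinset v ∪ G.neighborFinset b)

lemma disjoint_pentagonSide (v a b : V) :
    Disjoint (G.pentagonSide v a b) (G.pentagonSide v b a) := by
  refine Finset.disjoint_left.mpr fun x hab hba => ?_
  simp only [pentagonSide, mem_sdiff, mem_insert, mem_union] at hab hba
  exact hab.2 (Or.inr (Or.inr hba.1))

lemma card_pentagonSide_union_le {v a : V} (b : V) (ha : G.Adj v a) :
    #(G.pentagonSide v a b ∪ G.pentagonSide v b a) ≤ Fintype.card V - 2 := by
  have hsub : G.pentagonSide v a b ∪ G.pentagonSide v b a ⊆ (univ.erase v).erase a := by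
    intro x hx
    simp only [pentagonSide, mem_union, mem_sdiff, mem_insert, mem_neighborFinset] at hx
    simp only [mem_erase, mem_univ, and_true]
    rcases hx with ⟨hxa, hx⟩ | ⟨-, hx⟩
    · exact ⟨hxa.ne', fun h => hx (Or.inl h)⟩
    · exact ⟨fun h => hx (Or.inr (Or.inl (h ▸ ha))), fun h => hx (Or.inl h)⟩
  calc _ ≤ #((univ.erase v).erase a) := card_le_card hsub
    _ = Fintype.card V - 2 := by
      rw [card_erase_of_mem (mem_erase.mpr ⟨ha.ne', mem_univ a⟩), card_erase_of_mem (mem_univ v),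
        card_univ, Nat.sub_sub]

variable (G) in
def pentagonTuples (v : V) : Finset (Σ _ : V × V, V × V) :=
  (G.neighborFinset v).offDiag.sigma fun ab =>
    G.interedges (G.pentagonSide v ab.1 ab.2) (G.pentagonSide v ab.2 ab.1)

lemma mk_mem_pentagonTuples (f : cycleGraph 5 ↪g G) (i : Fin 5) :
    ⟨(f (i + 1), f (i + 4)), (f (i + 2), f (i + 3))⟩ ∈ G.pentagonTuples (f i) := by
  simp only [pentagonTuples, pentagonSide, mem_sigma, mem_offDiag, mk_mem_interedges_iff,
    mem_sdiff, mem_insert, mem_union, mem_neighborFinset, f.map_adj_iff, ne_eq,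
    f.injective.eq_iff]
  fin_cases i <;> decide

theorem natCard_embeddings_cycleGraph_five_le (v : V) :
    Nat.card {f : cycleGraph 5 ↪g G // ∃ i, f i = v} ≤ 5 * #(G.pentagonTuples v) := by
  let φ : {f : cycleGraph 5 ↪g G // ∃ i, f i = v} → Fin 5 × G.pentagonTuples v := fun f =>
    (f.2.choose, ⟨_, f.2.choose_spec ▸ mk_mem_pentagonTuples f.1 f.2.choose⟩)
  have hφ : φ.Injective := by
    rintro ⟨f, hf⟩ ⟨g, hg⟩ hfg
    simp only [φ, Prod.mk.injEq, Subtype.mk.injEq] at hfg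
    obtain ⟨hi, htuple⟩ := hfg
    have h0 : f hf.choose = g hf.choose := hf.choose_spec.trans (hi ▸ hg.choose_spec).symm
    rw [← hi] at htuple
    simp only [Sigma.mk.injEq, Prod.mk.injEq, heq_eq_eq] at htuple
    refine Subtype.ext <| RelEmbedding.ext fun t => ?_
    obtain ⟨s, rfl⟩ : ∃ s, t = hf.choose + s := ⟨t - hf.choose, by abel⟩
    fin_cases s <;> simp_all
  simpa using Nat.card_le_card_of_injective φ hφ

theorem card_pentagonTuples_le {k : ℕ} (hk : 1 ≤ k) (hc : CircumAtMost G (2 * k + 1)) (v : V) :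
    #(G.pentagonTuples v) ≤ G.degree v * (G.degree v - 1) * (k * (Fintype.card V - 2)) := by
  rw [pentagonTuples, card_sigma]
  calc _ ≤ ∑ _ab ∈ (G.neighborFinset v).offDiag, k * (Fintype.card V - 2) := by
        refine sum_le_sum fun ab hab => ?_
        have ha := (mem_neighborFinset _ _ _).mp (mem_offDiag.mp hab).1
        exact (card_interedges_le_of_circumAtMost hk hc (disjoint_pentagonSide _ _ _)).trans
          (Nat.mul_le_mul_left k (card_pentagonSide_union_le _ ha))
    _ = _ := by
        rw [sum_const, offDiag_card, card_neighborFinset_eq_degree, smul_eq_mul, Nat.mul_sub_one]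

end Finite

end SimpleGraph

lemma pentagon_count_bound_le {k n : ℚ} (hk : 3 ≤ k) (hn : 3 * k ≤ n) :
    (k - 1) * (k - 2) * (k * (n - 2)) / 2 ≤
      k * (k - 2) ^ 2 * n - 1 / 2 * k ^ 2 * (k - 2) ^ 2 := by
  have hk' : 0 ≤ k * (k - 2) := by nlinarith
  have hk3 : (0 : ℚ) ≤ k - 3 := by linarith
  nlinarith [mul_nonneg hk' (mul_nonneg hk3 (by linarith : (0 : ℚ) ≤ n - 3 * k)),
    mul_nonneg hk' (mul_nonneg hk3 (by linarith : (0 : ℚ) ≤ 2 * k + 1))]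

theorem C5_through_low_degree_vertex_general {V : Type*} [Fintype V] [DecidableEq V]
    (G : SimpleGraph V) [DecidableRel G.Adj] (n ℓ k : ℕ)
    (hn : Fintype.card V = n) (hk : k = ℓ / 2) (hk3 : 3 ≤ k) (hnk : 3 * k ≤ n)
    (hc : CircumAtMost G ℓ)
    (v : V) (hd : G.degree v ≤ k - 1) :
    (cycleCountThrough G 5 v : ℚ) ≤
      (k : ℚ) * ((k : ℚ) - 2) ^ 2 * n - (1 / 2) * (k : ℚ) ^ 2 * ((k : ℚ) - 2) ^ 2 := by
  have hN : Nat.card {f : cycleGraph 5 ↪g G // ∃ i, f i = v} ≤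
      5 * ((k - 1) * (k - 2) * (k * (n - 2))) := by
    refine (natCard_embeddings_cycleGraph_five_le v).trans (Nat.mul_le_mul_left 5 ?_)
    refine (card_pentagonTuples_le (k := k) (by omega) (hc.mono (by omega)) v).trans ?_
    rw [hn]
    exact Nat.mul_le_mul_right _ (Nat.mul_le_mul hd (by omega : G.degree v - 1 ≤ k - 2))
  have hNℚ : (Nat.card {f : cycleGraph 5 ↪g G // ∃ i, f i = v} : ℚ) ≤
      5 * (((k : ℚ) - 1) * ((k : ℚ) - 2) * (k * ((n : ℚ) - 2))) := by
    have := (Nat.cast_le (α := ℚ)).mpr hN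
    push_cast [Nat.cast_sub (show 1 ≤ k by omega), Nat.cast_sub (show 2 ≤ k by omega),
      Nat.cast_sub (show 2 ≤ n by omega)] at this
    exact this
  calc (cycleCountThrough G 5 v : ℚ)
      ≤ Nat.card {f : cycleGraph 5 ↪g G // ∃ i, f i = v} / (2 * 5 : ℕ) := Nat.cast_div_le
    _ ≤ ((k : ℚ) - 1) * ((k : ℚ) - 2) * (k * ((n : ℚ) - 2)) / 2 := by push_cast; linarith
    _ ≤ _ := pentagon_count_bound_le (by exact_mod_cast hk3) (by exact_mod_cast hnk)

/-- If `G` is a 2-connected `n`-vertex graph with circumference at most `ℓ`,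
`k = ⌊ℓ/2⌋ ≥ 3`, `n ≥ 3k`, and `v` has degree at most `k - 1`, then the number of
5-cycles through `v` is at most `k(k-2)²n - k²(k-2)²/2`. -/
theorem C5_through_low_degree_vertex {V : Type*} [Fintype V] [DecidableEq V]
    (G : SimpleGraph V) [DecidableRel G.Adj] (n ℓ k : ℕ)
    (hn : Fintype.card V = n) (hk : k = ℓ / 2) (hk3 : 3 ≤ k) (hnk : 3 * k ≤ n)
    (h2 : TwoConnected G) (hc : CircumAtMost G ℓ)
    (v : V) (hd : G.degree v ≤ k - 1) :
    (cycleCountThrough G 5 v : ℚ) ≤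
      (k : ℚ) * ((k : ℚ) - 2) ^ 2 * n - (1 / 2) * (k : ℚ) ^ 2 * ((k : ℚ) - 2) ^ 2 :=
  C5_through_low_degree_vertex_general G n ℓ k hn hk hk3 hnk hc v hd
end

section
/- For every positive integer b and every k ≥ 2, the graph K_2 + bK_{k-1} (the join of an edge with b disjoint copies of the complete graph K_{k-1}) has circumference exactly 2k when b ≥ 2. -/
/-!
Vertices `0, 1` are hubs. An edge of a cycle that leaves a clique ends at a hub, and distinct
edges of a cycle end at distinct vertices; so a cycle meeting two cliques meets at most two, and
has at most `2 + 2(k - 1) = 2k` vertices. Two cliques and the two hubs do carry a `2k`-cycle.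
-/

/-- For `n = b(k-1) + 2`, the graph `K_2 + bK_{k-1}` on `Fin n`: vertices `0,1` are joined
to everything (and to each other), and the remaining vertices are partitioned into `b`
consecutive cliques of size `k-1`. -/
def K2JoinCliques (n k : ℕ) : SimpleGraph (Fin n) :=
  SimpleGraph.fromRel (fun a b =>
    a.val < 2 ∨ (2 ≤ a.val ∧ 2 ≤ b.val ∧ (a.val - 2) / (k - 1) = (b.val - 2) / (k - 1)))

open Finset

namespace SimpleGraph.Walk

variable {V ι : Type*} {G : SimpleGraph V}

theorem exists_dart_fst_mem_snd_notMem {v u w : V} (c : G.Walk v v) {s : Set V}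
    (hu : u ∈ c.support) (hus : u ∈ s) (hw : w ∈ c.support) (hws : w ∉ s) :
    ∃ d ∈ c.darts, d.fst ∈ s ∧ d.snd ∉ s := by
  classical
  by_cases hv : v ∈ s
  · obtain ⟨d, hd, hds⟩ := (c.takeUntil w hw).exists_boundary_dart s hv hws
    exact ⟨d, c.darts_takeUntil_subset_darts hw hd, hds⟩
  · obtain ⟨d, hd, hds⟩ := (c.dropUntil u hu).exists_boundary_dart s hus hv
    exact ⟨d, c.darts_dropUntil_subset_darts hu hd, hds⟩

section Blocks

variable [DecidableEq V] [DecidableEq ι] {H : Finset V} {block : V → ι}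

def visitedBlocks {u v : V} (c : G.Walk u v) (H : Finset V) (block : V → ι) : Finset ι :=
  {x ∈ c.support.toFinset | x ∉ H}.image block

theorem card_visitedBlocks_le {v : V} {c : G.Walk v v} (hc : c.IsCycle)
    (hblock : ∀ x y, G.Adj x y → x ∉ H → y ∉ H → block x = block y) :
    #(c.visitedBlocks H block) ≤ max 1 #H := by
  rcases le_or_gt #(c.visitedBlocks H block) 1 with h | h
  · exact le_max_of_le_left h
  refine le_max_of_le_right ?_
  have hsnd : (c.darts.map (·.snd)).Nodup := c.map_snd_darts ▸ hc.support_nodup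
  calc #(c.visitedBlocks H block)
      ≤ #{d ∈ c.darts.toFinset | d.fst ∉ H ∧ d.snd ∈ H} := by
        refine card_le_card_of_surjOn (fun d ↦ block d.fst) fun i hi ↦ ?_
        obtain ⟨j, hj, hji⟩ := exists_mem_ne h i
        simp only [visitedBlocks, mem_coe, mem_image, mem_filter, List.mem_toFinset] at hi hj
        obtain ⟨x, ⟨hx, hxH⟩, rfl⟩ := hi
        obtain ⟨y, ⟨hy, -⟩, rfl⟩ := hj
        obtain ⟨d, hd, ⟨hdH, hdx⟩, hds⟩ := c.exists_dart_fst_mem_snd_notMem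
          (s := {z | z ∉ H ∧ block z = block x}) hx ⟨hxH, rfl⟩ hy (fun h ↦ hji h.2)
        have hdsH : d.snd ∈ H := by
          by_contra hdsH
          exact hds ⟨hdsH, (hblock _ _ d.adj hdH hdsH).symm.trans hdx⟩
        exact ⟨d, by simp [hd, hdH, hdsH], hdx⟩
    _ ≤ #H := by
        refine card_le_card_of_injOn (·.snd) (fun d hd ↦ by simp_all) fun d hd d' hd' hdd' ↦ ?_
        simp only [coe_filter, List.mem_toFinset, Set.mem_ofPred_eq] at hd hd'
        exact List.inj_on_of_nodup_map hsnd hd.1 hd'.1 hdd'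

theorem length_le_of_isCycle [Fintype V] {v : V} {c : G.Walk v v} (hc : c.IsCycle)
    (hblock : ∀ x y, G.Adj x y → x ∉ H → y ∉ H → block x = block y) {m : ℕ}
    (hm : ∀ i, #{x | x ∉ H ∧ block x = i} ≤ m) :
    c.length ≤ #H + max 1 #H * m := by
  have hcover : c.support.tail.toFinset ⊆
      H ∪ (c.visitedBlocks H block).biUnion fun i ↦ {x | x ∉ H ∧ block x = i} := by
    intro x hx
    by_cases hxH : x ∈ H
    · exact mem_union_left _ hxH
    refine mem_union_right _ (mem_biUnion.mpr ⟨block x, ?_, by simp [hxH]⟩)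
    exact mem_image_of_mem _ (by simp [List.mem_of_mem_tail (List.mem_toFinset.mp hx), hxH])
  calc c.length = #c.support.tail.toFinset := by
        rw [List.toFinset_card_of_nodup hc.support_nodup, List.length_tail, length_support]; rfl
    _ ≤ #H + #(c.visitedBlocks H block) * m :=
        (card_le_card hcover).trans <| (card_union_le _ _).trans <|
          Nat.add_le_add_left (card_biUnion_le_card_mul _ _ _ fun i _ ↦ hm i) _
    _ ≤ #H + max 1 #H * m := by gcongr; exact card_visitedBlocks_le hc hblock

end Blocks

end SimpleGraph.Walk

theorem SimpleGraph.cycleGraph_adj_val {n : ℕ} {u v : Fin n} (h : (cycleGraph n).Adj u v) :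
    u.val + 1 = v.val ∨ v.val + 1 = u.val ∨ (u.val = 0 ∧ v.val + 1 = n) ∨
      (v.val = 0 ∧ u.val + 1 = n) := by
  rw [cycleGraph_adj'] at h
  rcases lt_trichotomy u v with huv | rfl | hvu
  · rw [Fin.coe_sub_iff_lt.mpr huv, Fin.sub_val_of_le huv.le] at h
    omega
  · simp [Fin.sub_val_of_le le_rfl] at h
  · rw [Fin.coe_sub_iff_lt.mpr hvu, Fin.sub_val_of_le hvu.le] at h
    omega

namespace K2JoinCliques

open SimpleGraph

variable {n k : ℕ}

theorem adj_iff {a b : Fin n} :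
    (K2JoinCliques n k).Adj a b ↔ a ≠ b ∧
      (a.val < 2 ∨ b.val < 2 ∨
        (2 ≤ a.val ∧ 2 ≤ b.val ∧ (a.val - 2) / (k - 1) = (b.val - 2) / (k - 1))) := by
  rw [K2JoinCliques, fromRel_adj]
  grind

theorem block_eq_of_adj {a b : Fin n} (h : (K2JoinCliques n k).Adj a b) (ha : ¬ a.val < 2)
    (hb : ¬ b.val < 2) : (a.val - 2) / (k - 1) = (b.val - 2) / (k - 1) := by
  grind [adj_iff]

theorem card_block_le (hk : 2 ≤ k) (i : ℕ) :
    #{x : Fin n | ¬ x.val < 2 ∧ (x.val - 2) / (k - 1) = i} ≤ k - 1 := by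
  -- within a block, a vertex is determined by its remainder modulo `k - 1`
  refine (card_le_card_of_injOn (fun x ↦ (x.val - 2) % (k - 1)) (t := range (k - 1))
    (fun x _ ↦ by simpa using Nat.mod_lt _ (by omega)) fun x hx y hy hxy ↦ ?_).trans_eq
      (card_range _)
  simp only [coe_filter, mem_univ, true_and, Set.mem_ofPred_eq] at hx hy
  have hx' := Nat.div_add_mod (x.val - 2) (k - 1)
  have hy' := Nat.div_add_mod (y.val - 2) (k - 1)
  rw [hx.2] at hx'
  rw [hy.2] at hy'
  simp only at hxy
  ext
  omega

theorem card_hubs_le : #{x : Fin n | x.val < 2} ≤ 2 :=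
  (card_le_card_of_injOn Fin.val (t := range 2) (fun x hx ↦ by simpa using hx)
    Fin.val_injective.injOn).trans_eq (card_range 2)

theorem length_le_of_isCycle (hk : 2 ≤ k) {v : Fin n} {c : (K2JoinCliques n k).Walk v v}
    (hc : c.IsCycle) : c.length ≤ 2 * k := by
  have h := c.length_le_of_isCycle (H := {x | x.val < 2}) (block := fun x ↦ (x.val - 2) / (k - 1))
    hc (fun x y hxy hx hy ↦ block_eq_of_adj hxy (by simpa using hx) (by simpa using hy))
    fun i ↦ by simpa using card_block_le (n := n) hk i
  have h2 := card_hubs_le (n := n)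
  have : max 1 #{x : Fin n | x.val < 2} * (k - 1) ≤ 2 * (k - 1) :=
    Nat.mul_le_mul_right _ (max_le (by omega) h2)
  omega

theorem adj_of_hub_or_same_clique {a b : Fin n} (hab : a ≠ b)
    (h : a.val < 2 ∨ b.val < 2 ∨ (2 ≤ a.val ∧ a.val ≤ k ∧ 2 ≤ b.val ∧ b.val ≤ k) ∨
      (k < a.val ∧ a.val < 2 * k ∧ k < b.val ∧ b.val < 2 * k)) :
    (K2JoinCliques n k).Adj a b := by
  refine adj_iff.mpr ⟨hab, ?_⟩
  rcases h with h | h | h | h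
  · exact Or.inl h
  · exact Or.inr (Or.inl h)
  · refine Or.inr (Or.inr ⟨h.1, h.2.2.1, ?_⟩)
    rw [Nat.div_eq_of_lt (by omega), Nat.div_eq_of_lt (by omega)]
  · refine Or.inr (Or.inr ⟨by omega, by omega, ?_⟩)
    rw [Nat.div_eq_of_lt_le (k := 1) (by omega) (by omega),
      Nat.div_eq_of_lt_le (k := 1) (by omega) (by omega)]

-- The `i`-th vertex of the cycle `0, 2, …, k, 1, k + 1, …, 2k - 1`: hub, first clique, hub,
-- second clique.
def cycleVertex (k i : ℕ) : ℕ :=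
  if i = 0 then 0 else if i = k then 1 else if i < k then i + 1 else i

theorem cycleGraph_isContained (h2k : 2 * k ≤ n) :
    cycleGraph (2 * k) ⊑ K2JoinCliques n k := by
  have hlt (i : Fin (2 * k)) : cycleVertex k i < n := by unfold cycleVertex; split_ifs <;> omega
  let f (i : Fin (2 * k)) : Fin n := ⟨cycleVertex k i, hlt i⟩
  have hf : Function.Injective f := fun i j hij ↦ by
    simp only [f, Fin.mk.injEq, cycleVertex] at hij
    ext
    split_ifs at hij <;> omega
  refine ⟨⟨⟨f, fun {i j} hij ↦ ?_⟩, hf⟩⟩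
  refine adj_of_hub_or_same_clique (hf.ne hij.ne) ?_
  have := cycleGraph_adj_val hij
  have := i.isLt
  have := j.isLt
  simp only [f, cycleVertex]
  split_ifs <;> omega

end K2JoinCliques

/-- For `b ≥ 2` and `k ≥ 2`, the graph `K_2 + bK_{k-1}` has circumference exactly `2k`. -/
theorem circumference_K2JoinCliques (b k : ℕ) (hb : 2 ≤ b) (hk : 2 ≤ k) :
    (∃ (v : Fin (b * (k - 1) + 2)) (c : (K2JoinCliques (b * (k - 1) + 2) k).Walk v v),
        c.IsCycle ∧ c.length = 2 * k) ∧
      ∀ (v : Fin (b * (k - 1) + 2)) (c : (K2JoinCliques (b * (k - 1) + 2) k).Walk v v),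
        c.IsCycle → c.length ≤ 2 * k := by
  have h2k : 2 * k ≤ b * (k - 1) + 2 := by
    have := Nat.mul_le_mul_right (k - 1) hb
    omega
  exact ⟨(SimpleGraph.cycleGraph_isContained_iff (by omega)).mp
      (K2JoinCliques.cycleGraph_isContained h2k),
    fun _ _ hc ↦ K2JoinCliques.length_le_of_isCycle hk hc⟩
end
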